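/- Let Y ⊆ X be sets and let 𝓔, 𝓔' be uniformly locally finite coarse structures on Y and X respectively. Then 𝓔 ⊆ 𝓔' if and only if the inclusion ℓ²(Y) ⊆ ℓ²(X) induces an inclusion of C*_u(Y,𝓔) into C*_u(X,𝓔'). -/

import Mathlib

open ContinuousLinearMap

/-- A coarse structure on `X`: a collection of subsets of `X × X` containing the diagonal
and closed under subsets, finite unions, inverses, and composition. -/
structure CoarseStructure (X : Type*) where
  sets : Set (Set (X × X))
  diagonal_mem : {p : X × X | p.1 = p.2} ∈ sets
  subset_mem : ∀ E ∈ sets, ∀ F ⊆ E, F ∈ sets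
  union_mem : ∀ E ∈ sets, ∀ F ∈ sets, E ∪ F ∈ sets
  inv_mem : ∀ E ∈ sets, {p : X × X | (p.2, p.1) ∈ E} ∈ sets
  comp_mem : ∀ E ∈ sets, ∀ F ∈ sets,
    {p : X × X | ∃ y, (p.1, y) ∈ E ∧ (y, p.2) ∈ F} ∈ sets

/-- A coarse structure is uniformly locally finite if each entourage has uniformly
finite sections. -/
def CoarseStructure.ULF {X : Type*} (𝓔 : CoarseStructure X) : Prop :=
  ∀ E ∈ 𝓔.sets, ∃ k : ℕ, ∀ x : X,
    Set.Finite {y | (x, y) ∈ E} ∧ Nat.card {y | (x, y) ∈ E} ≤ k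

noncomputable section

/-- The standard basis vector `δ_x` of `ℓ²(X)`. -/
def deltaVec (X : Type*) [DecidableEq X] (x : X) : lp (fun _ : X => ℂ) 2 :=
  lp.single 2 x 1

/-- The rank-one orthogonal projection `e_{xx}` onto `ℂ δ_x` in `ℓ²(X)`. -/
def ee (X : Type*) [DecidableEq X] (x : X) :
    lp (fun _ : X => ℂ) 2 →L[ℂ] lp (fun _ : X => ℂ) 2 :=
  (innerSL ℂ (deltaVec X x)).smulRight (deltaVec X x)

/-- The support of an operator `a` on `ℓ²(X)`:
`{(x, y) : ⟨a δ_x, δ_y⟩ ≠ 0}`. -/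
def opSupport {X : Type*} [DecidableEq X]
    (a : lp (fun _ : X => ℂ) 2 →L[ℂ] lp (fun _ : X => ℂ) 2) : Set (X × X) :=
  {p | inner (𝕜 := ℂ) (a (deltaVec X p.1)) (deltaVec X p.2) ≠ 0}

/-- The uniform Roe algebra of `(X, 𝓔)`: the operator-norm closure of the set of
operators with `𝓔`-bounded propagation. -/
def RoeAlgebra {X : Type*} [DecidableEq X] (𝓔 : CoarseStructure X) :
    Set (lp (fun _ : X => ℂ) 2 →L[ℂ] lp (fun _ : X => ℂ) 2) :=
  closure {a | opSupport a ∈ 𝓔.sets}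

end

/-!
Conjugation by `J` moves the matrix entries of an operator on `ℓ²(Y)` to the same positions in
`ℓ²(X)` and vanishes outside `Y × Y`, so it sends operators supported in `E` to operators supported
in the image of `E`; being continuous, it maps `C*_u(Y, 𝓔)` into `C*_u(X, 𝓔')` when `𝓔 ⊆ 𝓔'`.

Conversely, an entourage `E` of the u.l.f. structure `𝓔` has at most `k` points in each row
and `k'` in each column, so by the Schur test its `0/1` matrix is a bounded operator `a`, of norm
at most `√(k k')`, lying in `C*_u(Y, 𝓔)`. If `J a J*` is within distance `1` of some `b` with
`opSupport b ∈ 𝓔'`, every entry of `b` over `E` is nonzero, hence `E ⊆ opSupport b ∈ 𝓔'`.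
-/

open scoped InnerProductSpace

namespace Finset

lemma sum_sum_le_mul_sum_biUnion {ι κ : Type*} [DecidableEq ι] (s : Finset κ) (S : κ → Finset ι)
    {c : ι → ℝ} (hc : ∀ i, 0 ≤ c i) {k : ℕ} (hk : ∀ i, #{j ∈ s | i ∈ S j} ≤ k) :
    ∑ j ∈ s, ∑ i ∈ S j, c i ≤ k * ∑ i ∈ s.biUnion S, c i := by
  calc ∑ j ∈ s, ∑ i ∈ S j, c i = ∑ i ∈ s.biUnion S, ∑ j ∈ s with i ∈ S j, c i :=
        sum_comm' fun j i => by simp only [mem_biUnion, mem_filter]; grind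
    _ = ∑ i ∈ s.biUnion S, #{j ∈ s | i ∈ S j} * c i := by simp only [sum_const, nsmul_eq_mul]
    _ ≤ ∑ i ∈ s.biUnion S, k * c i := by gcongr with i; exacts [hc i, hk i]
    _ = k * ∑ i ∈ s.biUnion S, c i := (mul_sum _ _ _).symm

lemma norm_sum_sq_le_card_mul_sum_sq {ι : Type*} (s : Finset ι) (f : ι → ℂ) :
    ‖∑ i ∈ s, f i‖ ^ 2 ≤ #s * ∑ i ∈ s, ‖f i‖ ^ 2 :=
  (pow_le_pow_left₀ (norm_nonneg _) (norm_sum_le s f) 2).trans sq_sum_le_card_mul_sum_sq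

end Finset

lemma lp.sum_norm_sq_le_norm_sq {ι : Type*} (f : lp (fun _ : ι => ℂ) 2) (s : Finset ι) :
    ∑ i ∈ s, ‖f i‖ ^ 2 ≤ ‖f‖ ^ 2 := by
  simpa using lp.sum_rpow_le_norm_rpow (p := 2) (by norm_num) f s

section

open Finset

local notation "ℓ²(" X ")" => lp (fun _ : X => ℂ) 2

section Delta

variable {X : Type*} [DecidableEq X]

lemma deltaVec_apply (x x' : X) : deltaVec X x x' = if x' = x then 1 else 0 := by
  simp [deltaVec, lp.single_apply, Pi.single_apply]

lemma inner_deltaVec_left (x : X) (f : ℓ²(X)) : ⟪deltaVec X x, f⟫_ℂ = f x := by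
  simp [deltaVec, lp.inner_single_left]

lemma inner_deltaVec_right (f : ℓ²(X)) (x : X) : ⟪f, deltaVec X x⟫_ℂ = starRingEnd ℂ (f x) := by
  simp [deltaVec, lp.inner_single_right]

lemma norm_deltaVec (x : X) : ‖deltaVec X x‖ = 1 := by
  simp [deltaVec, lp.norm_single]

lemma norm_inner_apply_deltaVec_le (a : ℓ²(X) →L[ℂ] ℓ²(X)) (x x' : X) :
    ‖⟪a (deltaVec X x), deltaVec X x'⟫_ℂ‖ ≤ ‖a‖ := by
  simpa [norm_deltaVec] using
    (norm_inner_le_norm (𝕜 := ℂ) (a (deltaVec X x)) (deltaVec X x')).trans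
      (mul_le_mul_of_nonneg_right (a.le_opNorm _) (norm_nonneg _))

lemma mem_opSupport_of_dist_lt {a b : ℓ²(X) →L[ℂ] ℓ²(X)} {x x' : X}
    (h : dist a b < ‖⟪a (deltaVec X x), deltaVec X x'⟫_ℂ‖) : (x, x') ∈ opSupport b := by
  intro hb
  have := norm_inner_apply_deltaVec_le (a - b) x x'
  rw [sub_apply, inner_sub_left, hb, sub_zero, ← dist_eq_norm] at this
  exact this.not_gt h

end Delta

section Inclusion

variable {X : Type*} [DecidableEq X] {Y : Set X} [DecidableEq Y] {J : ℓ²(Y) →L[ℂ] ℓ²(X)}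

lemma adjoint_apply_deltaVec_apply (hJ : ∀ y : Y, J (deltaVec Y y) = deltaVec X (y : X))
    (x : X) (y : Y) : adjoint J (deltaVec X x) y = deltaVec X x y := by
  rw [← inner_deltaVec_left, adjoint_inner_right, hJ, inner_deltaVec_left]

lemma adjoint_apply_deltaVec_coe (hJ : ∀ y : Y, J (deltaVec Y y) = deltaVec X (y : X))
    (y : Y) : adjoint J (deltaVec X y) = deltaVec Y y := by
  ext y'
  simp only [adjoint_apply_deltaVec_apply hJ, deltaVec_apply, Subtype.coe_inj]

lemma adjoint_apply_deltaVec_of_notMem (hJ : ∀ y : Y, J (deltaVec Y y) = deltaVec X (y : X))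
    {x : X} (hx : x ∉ Y) : adjoint J (deltaVec X x) = 0 := by
  ext y
  rw [adjoint_apply_deltaVec_apply hJ, deltaVec_apply, if_neg (by rintro rfl; exact hx y.2)]
  rfl

lemma inner_conj_apply_deltaVec_coe (hJ : ∀ y : Y, J (deltaVec Y y) = deltaVec X (y : X))
    (a : ℓ²(Y) →L[ℂ] ℓ²(Y)) (y y' : Y) :
    ⟪(J ∘L a ∘L adjoint J) (deltaVec X y), deltaVec X y'⟫_ℂ =
      ⟪a (deltaVec Y y), deltaVec Y y'⟫_ℂ := by
  rw [comp_apply, comp_apply, adjoint_apply_deltaVec_coe hJ, ← adjoint_inner_right,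
    adjoint_apply_deltaVec_coe hJ]

lemma opSupport_conj_subset (hJ : ∀ y : Y, J (deltaVec Y y) = deltaVec X (y : X))
    (a : ℓ²(Y) →L[ℂ] ℓ²(Y)) :
    opSupport (J ∘L a ∘L adjoint J) ⊆
      (fun p : Y × Y => ((p.1 : X), (p.2 : X))) '' opSupport a := by
  rintro ⟨x, x'⟩ hxx'
  by_cases hx : x ∈ Y
  swap
  · simp [opSupport, adjoint_apply_deltaVec_of_notMem hJ hx] at hxx'
  by_cases hx' : x' ∈ Y
  swap
  · simp [opSupport, ← adjoint_inner_right, adjoint_apply_deltaVec_of_notMem hJ hx'] at hxx'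
  refine ⟨(⟨x, hx⟩, ⟨x', hx'⟩), ?_, rfl⟩
  rwa [opSupport, Set.mem_ofPred_eq, ← inner_conj_apply_deltaVec_coe hJ]

end Inclusion

section Schur

variable {Y : Type*} [DecidableEq Y] {S : Y → Finset Y} {k k' : ℕ}

lemma sum_norm_sum_sq_le_mul_norm_sq (hS : ∀ z, #(S z) ≤ k')
    (hk : ∀ y (s : Finset Y), #{z ∈ s | y ∈ S z} ≤ k) (f : ℓ²(Y)) (s : Finset Y) :
    ∑ z ∈ s, ‖∑ y ∈ S z, f y‖ ^ 2 ≤ k * k' * ‖f‖ ^ 2 := by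
  calc ∑ z ∈ s, ‖∑ y ∈ S z, f y‖ ^ 2 ≤ ∑ z ∈ s, k' * ∑ y ∈ S z, ‖f y‖ ^ 2 := by
        gcongr with z
        exact (norm_sum_sq_le_card_mul_sum_sq _ _).trans
          (mul_le_mul_of_nonneg_right (by exact_mod_cast hS z) (by positivity))
    _ = k' * ∑ z ∈ s, ∑ y ∈ S z, ‖f y‖ ^ 2 := (mul_sum _ _ _).symm
    _ ≤ k' * (k * ∑ y ∈ s.biUnion S, ‖f y‖ ^ 2) := by
        gcongr
        exact sum_sum_le_mul_sum_biUnion s S (fun y => by positivity) (hk · s)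
    _ ≤ k' * (k * ‖f‖ ^ 2) := by gcongr; exact lp.sum_norm_sq_le_norm_sq f _
    _ = k * k' * ‖f‖ ^ 2 := by ring

lemma exists_clm_apply_eq_sum (hS : ∀ z, #(S z) ≤ k')
    (hk : ∀ y (s : Finset Y), #{z ∈ s | y ∈ S z} ≤ k) :
    ∃ a : ℓ²(Y) →L[ℂ] ℓ²(Y), ∀ f z, a f z = ∑ y ∈ S z, f y := by
  have hmem (f : ℓ²(Y)) : Memℓp (fun z => ∑ y ∈ S z, f y) 2 :=
    memℓp_gen' (C := k * k' * ‖f‖ ^ 2) (by simpa using sum_norm_sum_sq_le_mul_norm_sq hS hk f)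
  let a : ℓ²(Y) →ₗ[ℂ] ℓ²(Y) :=
    { toFun f := ⟨_, hmem f⟩
      map_add' f g := by ext z; exact sum_add_distrib
      map_smul' c f := by ext z; simp [mul_sum] }
  refine ⟨a.mkContinuous √(k * k') fun f => ?_, fun f z => rfl⟩
  refine lp.norm_le_of_forall_sum_le (p := 2) (by norm_num) (by positivity) fun s => ?_
  simpa [mul_pow, a] using sum_norm_sum_sq_le_mul_norm_sq hS hk f s

lemma exists_inner_apply_deltaVec_eq_indicator {E : Set (Y × Y)}
    (hrow : ∀ y, {z | (y, z) ∈ E}.Finite ∧ Nat.card {z | (y, z) ∈ E} ≤ k)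
    (hcol : ∀ z, {y | (y, z) ∈ E}.Finite ∧ Nat.card {y | (y, z) ∈ E} ≤ k') :
    ∃ a : ℓ²(Y) →L[ℂ] ℓ²(Y), ∀ y z,
      ⟪a (deltaVec Y y), deltaVec Y z⟫_ℂ = E.indicator 1 (y, z) := by
  let S z := (hcol z).1.toFinset
  have hS z : #(S z) ≤ k' := by
    rw [← Set.ncard_eq_toFinset_card _ (hcol z).1, ← Nat.card_coe_set_eq]
    exact (hcol z).2
  have hk y (s : Finset Y) : #{z ∈ s | y ∈ S z} ≤ k := by
    calc #{z ∈ s | y ∈ S z} = Set.ncard (↑{z ∈ s | y ∈ S z} : Set Y) :=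
          (Set.ncard_coe_finset _).symm
      _ ≤ Set.ncard {z | (y, z) ∈ E} := Set.ncard_le_ncard (fun z => by simp [S]) (hrow y).1
      _ ≤ k := Nat.card_coe_set_eq {z | (y, z) ∈ E} ▸ (hrow y).2
  obtain ⟨a, ha⟩ := exists_clm_apply_eq_sum hS hk
  refine ⟨a, fun y z => ?_⟩
  by_cases hyz : (y, z) ∈ E <;> simp [inner_deltaVec_right, ha, deltaVec_apply, S, hyz]

end Schur

end

theorem coarse_subset_iff_roe_subset_general {X : Type*} [DecidableEq X] (Y : Set X)
    [DecidableEq Y]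
    (𝓔 : CoarseStructure Y) (𝓔' : CoarseStructure X)
    (h𝓔 : 𝓔.ULF)
    (J : lp (fun _ : Y => ℂ) 2 →L[ℂ] lp (fun _ : X => ℂ) 2)
    (hJ : ∀ y : Y, J (deltaVec Y y) = deltaVec X (y : X)) :
    (∀ E ∈ 𝓔.sets,
        (fun p : Y × Y => ((p.1 : X), (p.2 : X))) '' E ∈ 𝓔'.sets) ↔
      ∀ a ∈ RoeAlgebra 𝓔, (J ∘L a ∘L adjoint J) ∈ RoeAlgebra 𝓔' := by
  constructor
  · intro hsub a ha
    refine map_mem_closure (f := fun b => J ∘L b ∘L adjoint J) (by fun_prop) ha fun b hb => ?_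
    exact 𝓔'.subset_mem _ (hsub _ hb) _ (opSupport_conj_subset hJ b)
  · intro hroe E hE
    obtain ⟨k, hrow⟩ := h𝓔 E hE
    obtain ⟨k', hcol⟩ := h𝓔 _ (𝓔.inv_mem E hE)
    obtain ⟨a, ha⟩ := exists_inner_apply_deltaVec_eq_indicator hrow hcol
    have ha_supp : opSupport a ⊆ E := fun p hp => by
      by_contra hpE
      exact hp (by rw [ha, Set.indicator_of_notMem hpE])
    obtain ⟨b, hb, hab⟩ := Metric.mem_closure_iff.1
      (hroe a (subset_closure (𝓔.subset_mem E hE _ ha_supp))) 1 one_pos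
    refine 𝓔'.subset_mem _ hb _ ?_
    rintro _ ⟨⟨y, z⟩, hyz, rfl⟩
    apply mem_opSupport_of_dist_lt
    rwa [inner_conj_apply_deltaVec_coe hJ, ha, Set.indicator_of_mem hyz, Pi.one_apply, norm_one]

/-- Let `Y ⊆ X`, with u.l.f. coarse structures `𝓔` on `Y` and `𝓔'` on `X`, and let
`J : ℓ²(Y) → ℓ²(X)` be the inclusion isometry (determined by `J δ_y = δ_y`).  Then
`𝓔 ⊆ 𝓔'` (under the inclusion `Y × Y ⊆ X × X`) if and only if conjugation by `J`
maps `C*_u(Y, 𝓔)` into `C*_u(X, 𝓔')`. -/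
theorem coarse_subset_iff_roe_subset {X : Type*} [DecidableEq X] (Y : Set X)
    [DecidableEq Y]
    (𝓔 : CoarseStructure Y) (𝓔' : CoarseStructure X)
    (h𝓔 : 𝓔.ULF) (h𝓔' : 𝓔'.ULF)
    (J : lp (fun _ : Y => ℂ) 2 →L[ℂ] lp (fun _ : X => ℂ) 2)
    (hJiso : ∀ f, ‖J f‖ = ‖f‖)
    (hJ : ∀ y : Y, J (deltaVec Y y) = deltaVec X (y : X)) :
    (∀ E ∈ 𝓔.sets,
        (fun p : Y × Y => ((p.1 : X), (p.2 : X))) '' E ∈ 𝓔'.sets) ↔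
      ∀ a ∈ RoeAlgebra 𝓔, (J ∘L a ∘L adjoint J) ∈ RoeAlgebra 𝓔' :=
  coarse_subset_iff_roe_subset_general Y 𝓔 𝓔' h𝓔 J hJ
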